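/- arXiv:2604.14769 — 3 statements merged into one kernel-verified Lean document; each statement's English description precedes it below -/
import Mathlib

section
/- Every matrix of rank at most N in the rearranged space arises from a Kronecker decomposition: for any matrix M ∈ ℝ^{(L·B)×A} with rank(M) ≤ N, there exist templates T₁, …, T_N ∈ ℝ^{1×A} and scalers S₁, …, S_N ∈ ℝ^{L×B} such that R(Σ_{i=1}^{N} T_i ⊗ S_i) = M. -/
open Matrix

noncomputable section

/-- Pair-index encoding `(i, j) ↦ j + n·i`, the zero-based form of `(i−1)·n + j`. -/
def pairIdx {m n : ℕ} (i : Fin m) (j : Fin n) : Fin (m * n) := finProdFinEquiv (i, j)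

/-- The rearrangement operator `R : ℝ^{L×(A·B)} → ℝ^{(L·B)×A}` defined entrywise by
`R(W)_{(ℓ−1)B+b, a} = W_{ℓ, (a−1)B+b}`. -/
def rearrange (L A B : ℕ) (W : Matrix (Fin L) (Fin (A * B)) ℝ) :
    Matrix (Fin (L * B)) (Fin A) ℝ := fun r a =>
  W (finProdFinEquiv.symm r).1 (pairIdx a (finProdFinEquiv.symm r).2)

/-- The Kronecker product of a row template `T ∈ ℝ^{1×A}` with a scaler `S ∈ ℝ^{L×B}`:
`(T ⊗ S)_{ℓ, (a−1)B+b} = T_{1,a} · S_{ℓ,b}`. -/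
def kron {L A B : ℕ} (T : Matrix (Fin 1) (Fin A) ℝ) (S : Matrix (Fin L) (Fin B) ℝ) :
    Matrix (Fin L) (Fin (A * B)) ℝ := fun ℓ c =>
  T 0 (finProdFinEquiv.symm c).1 * S ℓ (finProdFinEquiv.symm c).2

/-- The Frobenius norm `‖M‖_F = (Σ_{i,j} M_{ij}²)^{1/2}`. -/
def frobNorm {m n : ℕ} (M : Matrix (Fin m) (Fin n) ℝ) : ℝ :=
  Real.sqrt (∑ i, ∑ j, (M i j) ^ 2)

/-! A matrix of rank at most `N` factors as `U * W` through `Fin N`. Rearrangement sends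
`T ⊗ S` to the rank-one matrix `vec(S) · T`, so taking for `T_i` the `i`-th row of `W` and for
`S_i` the `i`-th column of `U` folded into an `L × B` matrix recovers `U * W = M`. -/

theorem LinearMap.exists_comp_eq_of_finrank_range_le {K V W X : Type*} [Field K]
    [AddCommGroup V] [Module K V] [AddCommGroup W] [Module K W] [AddCommGroup X] [Module K X]
    [FiniteDimensional K X] (φ : V →ₗ[K] W) [FiniteDimensional K (range φ)]
    (h : Module.finrank K (range φ) ≤ Module.finrank K X) :
    ∃ (χ : V →ₗ[K] X) (ψ : X →ₗ[K] W), ψ ∘ₗ χ = φ := by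
  obtain ⟨f, hf⟩ := finrank_le_iff_exists_linearMap.mp h
  obtain ⟨g, hgf⟩ := f.exists_leftInverse_of_injective (LinearMap.ker_eq_bot.mpr hf)
  refine ⟨f ∘ₗ φ.rangeRestrict, (range φ).subtype ∘ₗ g, ?_⟩
  ext v
  simp [← LinearMap.comp_apply g f, hgf]

theorem Matrix.exists_mul_eq_of_rank_le {K m n ι : Type*} [Field K] [Fintype m] [Fintype n]
    [DecidableEq n] [Fintype ι] [DecidableEq ι] (M : Matrix m n K)
    (h : M.rank ≤ Fintype.card ι) :
    ∃ (U : Matrix m ι K) (W : Matrix ι n K), U * W = M := by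
  obtain ⟨χ, ψ, hψχ⟩ := M.mulVecLin.exists_comp_eq_of_finrank_range_le (X := ι → K)
    (by rwa [Module.finrank_fintype_fun_eq_card])
  refine ⟨LinearMap.toMatrix' ψ, LinearMap.toMatrix' χ, ?_⟩
  rw [← LinearMap.toMatrix'_comp, hψχ, ← Matrix.toLin'_apply', LinearMap.toMatrix'_toLin']

theorem rearrange_sum_kron_eq_mul {L A B : ℕ} {ι : Type*} [Fintype ι]
    (U : Matrix (Fin (L * B)) ι ℝ) (W : Matrix ι (Fin A) ℝ) :
    rearrange L A B (∑ i, kron (replicateRow (Fin 1) (W i))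
      (of fun ℓ b => U (finProdFinEquiv (ℓ, b)) i)) = U * W := by
  ext r a
  simp only [rearrange, kron, pairIdx, Matrix.sum_apply, mul_apply, of_apply, replicateRow_apply,
    Equiv.symm_apply_apply, Prod.mk.eta, Equiv.apply_symm_apply, mul_comm]

theorem exists_kron_decomposition_of_rank_le_general (L A B N : ℕ)
    (M : Matrix (Fin (L * B)) (Fin A) ℝ) (hM : M.rank ≤ N) :
    ∃ (T : Fin N → Matrix (Fin 1) (Fin A) ℝ) (S : Fin N → Matrix (Fin L) (Fin B) ℝ),
      rearrange L A B (∑ i, kron (T i) (S i)) = M := by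
  obtain ⟨U, W, hUW⟩ := M.exists_mul_eq_of_rank_le (ι := Fin N) (by rwa [Fintype.card_fin])
  exact ⟨_, _, (rearrange_sum_kron_eq_mul U W).trans hUW⟩

/-- every matrix of rank at most `N` in the rearranged space arises from an
`N`-term Kronecker decomposition. -/
theorem exists_kron_decomposition_of_rank_le (L A B N : ℕ) (hL : 0 < L) (hA : 0 < A)
    (hB : 0 < B) (hN : 0 < N) (M : Matrix (Fin (L * B)) (Fin A) ℝ) (hM : M.rank ≤ N) :
    ∃ (T : Fin N → Matrix (Fin 1) (Fin A) ℝ) (S : Fin N → Matrix (Fin L) (Fin B) ℝ),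
      rearrange L A B (∑ i, kron (T i) (S i)) = M :=
  exists_kron_decomposition_of_rank_le_general L A B N M hM
end
end

section
/- (Lemma: Truncated Singular Value Bound of Kronecker Decomposition) For any matrix W ∈ ℝ^{L×P}, the minimum squared Frobenius reconstruction error over all N-term Kronecker decompositions equals the sum of the squared truncated singular values of the rearranged matrix: min over all templates T₁, …, T_N ∈ ℝ^{1×A} and scalers S₁, …, S_N ∈ ℝ^{L×B} of ‖W − Σ_{i=1}^{N} T_i ⊗ S_i‖_F² equals Σ_{j=N+1}^{min(L·B, A)} σ_j(R(W))², where σ_j denotes the j-th largest singular value. -/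
open Matrix

noncomputable section

/-- `svals M j` is the `j`-th largest singular value (1-based index `j`) of the real
matrix `M`: the square root of the `j`-th largest eigenvalue of `MᵀM`. -/
def svals {m n : ℕ} (M : Matrix (Fin m) (Fin n) ℝ) : ℕ → ℝ := fun j =>
  Real.sqrt
    ((((List.ofFn
        ((show (Mᵀ * M).IsHermitian by
            rw [← Matrix.conjTranspose_eq_transpose_of_trivial]
            exact Matrix.isHermitian_conjTranspose_mul_self M).eigenvalues)).insertionSort
        (· ≤ ·)).reverse).getD (j - 1) 0)

/-!
Rearranging turns `∑ i, Tᵢ ⊗ Sᵢ` into the sum of `N` outer products `vec(Sᵢ) Tᵢ`, so the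
error is `∑ r, ‖x r - y r‖²`, where `x r` are the rows of `R(W)` and the rows `y r` range over
subspaces `K` of dimension at most `N`. For fixed `K` the best choice is the orthogonal projection
`P`, whose error is `∑ j, λⱼ (1 - ‖P vⱼ‖²)` for the eigenpairs `(λⱼ, vⱼ)` of `R(W)ᵀ R(W)`. The
weights `‖P vⱼ‖²` lie in `[0, 1]` and sum to `dim K ≤ N`, so the error is at least the sum of all
but the `N` largest eigenvalues, with equality when `K` is spanned by the top `N` eigenvectors.
-/

open scoped RealInnerProductSpace Finset List
open Module

theorem List.ofFn_comp_equiv_perm {α : Type*} {n k : ℕ} (g : Fin k → α) (e : Fin n ≃ Fin k) :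
    List.ofFn (g ∘ e) ~ List.ofFn g := by
  rw [← Multiset.coe_eq_coe, ← Fin.univ_val_map, ← Fin.univ_val_map, ← Multiset.map_map,
    Multiset.map_univ_val_equiv]

theorem List.reverse_insertionSort_ofFn_eq_of_perm {α : Type*} [LinearOrder α] {n k : ℕ}
    {f : Fin n → α} {g : Fin k → α} (hg : Antitone g) (hfg : List.ofFn f ~ List.ofFn g) :
    ((List.ofFn f).insertionSort (· ≤ ·)).reverse = List.ofFn g :=
  List.Perm.eq_of_pairwise' (r := (· ≥ ·))
    (List.pairwise_reverse.mpr (List.pairwise_insertionSort _ _))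
    (List.sortedGE_iff_pairwise.mp hg.sortedGE_ofFn)
    ((List.reverse_perm _).trans ((List.perm_insertionSort _ _).trans hfg))

theorem List.sum_Icc_getD_ofFn_eq_sum_filter {k m N : ℕ} (g : Fin k → ℝ)
    (hg : ∀ j : Fin k, m ≤ j.val → g j = 0) :
    ∑ j ∈ Finset.Icc (N + 1) (min m k), (List.ofFn g).getD (j - 1) 0 =
      ∑ j with N ≤ j.val, g j := by
  rw [← Finset.sum_filter_of_ne (p := fun j : Fin k => j.val < m)
    fun j _ hj => not_le.mp fun h => hj (hg j h), Finset.filter_filter]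
  refine Finset.sum_bij' (fun i hi => ⟨i - 1, by grind⟩) (fun j _ => j.val + 1)
    (fun i hi => by grind) (fun j hj => by grind) (fun i hi => by grind) (fun j _ => by simp)
    fun i hi => ?_
  rw [List.getD_eq_getElem _ _ (by grind [List.length_ofFn]), List.getElem_ofFn]

theorem Antitone.sum_mul_le_sum_filter_lt {n N : ℕ} {g c : Fin n → ℝ} (hg : Antitone g)
    (hg0 : ∀ j, 0 ≤ g j) (hc0 : ∀ j, 0 ≤ c j) (hc1 : ∀ j, c j ≤ 1) (hcN : ∑ j, c j ≤ N) :
    ∑ j, g j * c j ≤ ∑ j with j.val < N, g j := by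
  obtain ⟨t, ht0, hlt, hge⟩ : ∃ t, 0 ≤ t ∧ (∀ j : Fin n, j.val < N → t ≤ g j) ∧
      ∀ j : Fin n, N ≤ j.val → g j ≤ t := by
    by_cases h : N < n
    · exact ⟨g ⟨N, h⟩, hg0 _, fun j hj => hg (Fin.le_def.mpr hj.le), fun j hj => hg hj⟩
    · exact ⟨0, le_rfl, fun j _ => hg0 j, fun j hj => absurd j.2 (by omega)⟩
  have hpoint : ∀ j, g j * c j ≤ t * c j + if j.val < N then g j - t else 0 := by
    intro j
    split_ifs with h
    · nlinarith [hlt j h, hc1 j]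
    · nlinarith [hge j (not_lt.mp h), hc0 j]
  have hcard : ∑ j, c j ≤ #{j : Fin n | j.val < N} := by
    have hcn : ∑ j, c j ≤ n := by
      simpa using Finset.sum_le_sum fun j (_ : j ∈ Finset.univ) => hc1 j
    rw [Fin.card_filter_val_lt]
    push_cast
    exact le_min hcn hcN
  calc ∑ j, g j * c j ≤ ∑ j, (t * c j + if j.val < N then g j - t else 0) :=
        Finset.sum_le_sum fun j _ => hpoint j
    _ = t * ∑ j, c j + ∑ j with j.val < N, (g j - t) := by
        rw [Finset.sum_add_distrib, Finset.mul_sum, Finset.sum_filter]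
    _ ≤ t * #{j : Fin n | j.val < N} + ∑ j with j.val < N, (g j - t) := by gcongr
    _ = ∑ j with j.val < N, g j := by
        rw [Finset.sum_sub_distrib, Finset.sum_const, nsmul_eq_mul]
        ring

theorem OrthonormalBasis.sum_norm_starProjection_sq {E ι : Type*} [NormedAddCommGroup E]
    [InnerProductSpace ℝ E] [FiniteDimensional ℝ E] [Fintype ι] (b : OrthonormalBasis ι ℝ E)
    (K : Submodule ℝ E) :
    ∑ i, ‖K.starProjection (b i)‖ ^ 2 = finrank ℝ K := by
  have hP : LinearMap.IsProj K (K.starProjection : E →ₗ[ℝ] E) :=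
    ⟨K.starProjection_apply_mem, fun _ => K.starProjection_eq_self_iff.mpr⟩
  rw [← hP.trace, LinearMap.trace_eq_sum_inner _ b]
  refine Finset.sum_congr rfl fun i _ => ?_
  rw [← real_inner_self_eq_norm_sq, ContinuousLinearMap.coe_coe,
    ← K.inner_starProjection_left_eq_right,
    K.starProjection_eq_self_iff.mpr (K.starProjection_apply_mem _), real_inner_comm]

namespace LinearMap.IsSymmetric

variable {E : Type*} [NormedAddCommGroup E] [InnerProductSpace ℝ E] [FiniteDimensional ℝ E]
  {T : E →ₗ[ℝ] E} (hT : T.IsSymmetric) {n : ℕ} (hn : finrank ℝ E = n)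

theorem inner_apply_self_eq_sum_eigenvalues_mul_sq (v : E) :
    ⟪T v, v⟫ = ∑ j, hT.eigenvalues hn j * ⟪hT.eigenvectorBasis hn j, v⟫ ^ 2 := by
  rw [← (hT.eigenvectorBasis hn).sum_inner_mul_inner]
  refine Finset.sum_congr rfl fun j _ => ?_
  rw [hT, apply_eigenvectorBasis, real_inner_smul_right, real_inner_comm v]
  simp only [RCLike.ofReal_real_eq_id, id_eq]
  ring

variable {ι : Type*} [Fintype ι] {x : ι → E} (hx : ∀ v, ⟪T v, v⟫ = ∑ r, ⟪x r, v⟫ ^ 2)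
include hx

theorem eigenvalues_nonneg_of_inner_apply_self_eq_sum_sq (j : Fin n) :
    0 ≤ hT.eigenvalues hn j :=
  IsPositive.nonneg_eigenvalues
    ⟨hT, fun v => by simpa [hx] using Finset.sum_nonneg fun r _ => sq_nonneg ⟪x r, v⟫⟩ hn j

theorem sum_norm_apply_sq_eq_sum_eigenvalues_mul {Q : E →ₗ[ℝ] E} (hQ : Q.IsSymmetric) :
    ∑ r, ‖Q (x r)‖ ^ 2 = ∑ j, hT.eigenvalues hn j * ‖Q (hT.eigenvectorBasis hn j)‖ ^ 2 := by
  calc ∑ r, ‖Q (x r)‖ ^ 2 = ∑ l, ∑ r, ⟪x r, Q (hT.eigenvectorBasis hn l)⟫ ^ 2 := by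
        simp_rw [← (hT.eigenvectorBasis hn).sum_sq_inner_right (Q _), ← hQ _ (x _),
          real_inner_comm (x _)]
        exact Finset.sum_comm
    _ = ∑ l, ∑ j, hT.eigenvalues hn j *
          ⟪hT.eigenvectorBasis hn j, Q (hT.eigenvectorBasis hn l)⟫ ^ 2 := by
        simp_rw [← hx, hT.inner_apply_self_eq_sum_eigenvalues_mul_sq hn]
    _ = ∑ j, hT.eigenvalues hn j * ‖Q (hT.eigenvectorBasis hn j)‖ ^ 2 := by
        rw [Finset.sum_comm]
        refine Finset.sum_congr rfl fun j _ => ?_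
        simp_rw [← Finset.mul_sum, ← hQ (hT.eigenvectorBasis hn j),
          (hT.eigenvectorBasis hn).sum_sq_inner_left]

theorem sum_norm_sub_starProjection_sq_eq_sum_eigenvalues_mul (K : Submodule ℝ E) :
    ∑ r, ‖x r - K.starProjection (x r)‖ ^ 2 =
      ∑ j, hT.eigenvalues hn j * (1 - ‖K.starProjection (hT.eigenvectorBasis hn j)‖ ^ 2) := by
  calc ∑ r, ‖x r - K.starProjection (x r)‖ ^ 2
      = ∑ r, ‖(Kᗮ.starProjection : E →ₗ[ℝ] E) (x r)‖ ^ 2 := by simp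
    _ = ∑ j, hT.eigenvalues hn j * ‖Kᗮ.starProjection (hT.eigenvectorBasis hn j)‖ ^ 2 :=
        hT.sum_norm_apply_sq_eq_sum_eigenvalues_mul hn hx Kᗮ.starProjection_isSymmetric
    _ = _ := by
        refine Finset.sum_congr rfl fun j _ => ?_
        have hpyth := K.norm_sq_eq_add_norm_sq_starProjection (hT.eigenvectorBasis hn j)
        rw [(hT.eigenvectorBasis hn).norm_eq_one] at hpyth
        linear_combination -hT.eigenvalues hn j * hpyth

theorem sum_filter_le_sum_norm_sub_sq {N : ℕ} (K : Submodule ℝ E) (hK : finrank ℝ K ≤ N)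
    {y : ι → E} (hy : ∀ r, y r ∈ K) :
    ∑ j with N ≤ j.val, hT.eigenvalues hn j ≤ ∑ r, ‖x r - y r‖ ^ 2 := by
  have hsplit : ∑ j with j.val < N, hT.eigenvalues hn j +
      ∑ j with N ≤ j.val, hT.eigenvalues hn j = ∑ j, hT.eigenvalues hn j := by
    simpa only [not_lt] using Finset.sum_filter_add_sum_filter_not Finset.univ
      (fun j : Fin n => j.val < N) (hT.eigenvalues hn)
  have htop := (hT.eigenvalues_antitone hn).sum_mul_le_sum_filter_lt (N := N)
    (hT.eigenvalues_nonneg_of_inner_apply_self_eq_sum_sq hn hx)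
    (fun j => sq_nonneg ‖K.starProjection (hT.eigenvectorBasis hn j)‖)
    (fun j => pow_le_one₀ (norm_nonneg _) ((K.norm_starProjection_apply_le _).trans_eq
      ((hT.eigenvectorBasis hn).norm_eq_one j)))
    (by rw [(hT.eigenvectorBasis hn).sum_norm_starProjection_sq]; exact_mod_cast hK)
  have hmin : ∀ r, ‖x r - K.starProjection (x r)‖ ≤ ‖x r - y r‖ := fun r =>
    (K.starProjection_minimal (x r)).trans_le <| ciInf_le (f := fun w : K => ‖x r - w‖)
      ⟨0, Set.forall_mem_range.mpr fun _ => norm_nonneg _⟩ ⟨y r, hy r⟩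
  calc ∑ j with N ≤ j.val, hT.eigenvalues hn j
      ≤ ∑ j, hT.eigenvalues hn j * (1 - ‖K.starProjection (hT.eigenvectorBasis hn j)‖ ^ 2) := by
        simp_rw [mul_sub, mul_one, Finset.sum_sub_distrib]
        linarith
    _ = ∑ r, ‖x r - K.starProjection (x r)‖ ^ 2 :=
        (hT.sum_norm_sub_starProjection_sq_eq_sum_eigenvalues_mul hn hx K).symm
    _ ≤ ∑ r, ‖x r - y r‖ ^ 2 :=
        Finset.sum_le_sum fun r _ => pow_le_pow_left₀ (norm_nonneg _) (hmin r) 2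

theorem eigenvalues_eq_zero_of_card_le {j : Fin n} (hj : Fintype.card ι ≤ j) :
    hT.eigenvalues hn j = 0 := by
  have hnonneg := hT.eigenvalues_nonneg_of_inner_apply_self_eq_sum_sq hn hx
  -- `x` itself has rows in a subspace of dimension at most `card ι`, with error `0`
  have hle : ∑ i with Fintype.card ι ≤ i.val, hT.eigenvalues hn i ≤ 0 := by
    simpa using hT.sum_filter_le_sum_norm_sub_sq hn hx (Submodule.span ℝ (Set.range x))
      (finrank_range_le_card x) (fun r => Submodule.subset_span (Set.mem_range_self r))
  exact (Finset.sum_eq_zero_iff_of_nonneg fun i _ => hnonneg i).mp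
    (hle.antisymm (Finset.sum_nonneg fun i _ => hnonneg i)) j (by simpa using hj)

theorem exists_sum_norm_sub_sum_smul_sq_eq (N : ℕ) :
    ∃ (c : ι → Fin N → ℝ) (d : Fin N → E),
      ∑ r, ‖x r - ∑ i, c r i • d i‖ ^ 2 = ∑ j with N ≤ j.val, hT.eigenvalues hn j := by
  let b := hT.eigenvectorBasis hn
  let d : Fin N → E := fun i => if h : i.val < n then b ⟨i, h⟩ else 0
  let K := Submodule.span ℝ (Set.range d)
  choose c hc using fun r =>
    (Submodule.mem_span_range_iff_exists_fun ℝ).mp (K.starProjection_apply_mem (x r))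
  refine ⟨c, d, ?_⟩
  simp_rw [hc, hT.sum_norm_sub_starProjection_sq_eq_sum_eigenvalues_mul hn hx K,
    Finset.sum_filter]
  refine Finset.sum_congr rfl fun j _ => ?_
  split_ifs with hj
  · have hperp : Submodule.span ℝ {b j} ≤ Kᗮ := (Submodule.isOrtho_span.mpr ?_).ge
    · rw [K.starProjection_apply_eq_zero_iff.mpr (hperp (Submodule.mem_span_singleton_self _))]
      simp
    rintro _ ⟨i, rfl⟩ _ rfl
    simp only [d]
    split_ifs with hi
    · exact b.orthonormal.inner_eq_zero (Fin.ne_of_val_ne (by simp only; omega))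
    · exact inner_zero_left _
  · have hmem : b j ∈ K := Submodule.subset_span ⟨⟨j, by omega⟩, by simp [d]⟩
    rw [K.starProjection_eq_self_iff.mpr hmem, b.norm_eq_one]
    simp

theorem isLeast_sum_norm_sub_sum_smul_sq (N : ℕ) :
    IsLeast {e | ∃ (c : ι → Fin N → ℝ) (d : Fin N → E), e = ∑ r, ‖x r - ∑ i, c r i • d i‖ ^ 2}
      (∑ j with N ≤ j.val, hT.eigenvalues hn j) := by
  refine ⟨?_, ?_⟩
  · obtain ⟨c, d, h⟩ := hT.exists_sum_norm_sub_sum_smul_sq_eq hn hx N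
    exact ⟨c, d, h.symm⟩
  · rintro _ ⟨c, d, rfl⟩
    refine hT.sum_filter_le_sum_norm_sub_sq hn hx (Submodule.span ℝ (Set.range d))
      ((finrank_range_le_card d).trans (by simp)) fun r => ?_
    exact Submodule.sum_mem _ fun i _ =>
      Submodule.smul_mem _ _ (Submodule.subset_span (Set.mem_range_self i))

end LinearMap.IsSymmetric

theorem Matrix.inner_toEuclideanLin_transpose_mul_self {ι κ : Type*} [Fintype ι] [Fintype κ]
    [DecidableEq κ] (X : Matrix ι κ ℝ) (v : EuclideanSpace ℝ κ) :
    ⟪toEuclideanLin (Xᵀ * X) v, v⟫ = ∑ r, ⟪WithLp.toLp 2 (X r), v⟫ ^ 2 := by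
  rw [EuclideanSpace.inner_eq_star_dotProduct, toLpLin_apply, WithLp.ofLp_toLp, star_trivial,
    ← mulVec_mulVec, dotProduct_mulVec, vecMul_transpose]
  refine Finset.sum_congr rfl fun r _ => ?_
  rw [sq, EuclideanSpace.inner_eq_star_dotProduct, star_trivial, WithLp.ofLp_toLp,
    dotProduct_comm]
  rfl

theorem svals_sq_eq_getD_eigenvalues₀ {m n : ℕ} (X : Matrix (Fin m) (Fin n) ℝ)
    (hX : (Xᵀ * X).IsHermitian) (hX0 : ∀ i, 0 ≤ hX.eigenvalues₀ i) (j : ℕ) :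
    svals X j ^ 2 = (List.ofFn hX.eigenvalues₀).getD (j - 1) 0 := by
  have hperm : List.ofFn hX.eigenvalues ~ List.ofFn hX.eigenvalues₀ :=
    List.ofFn_comp_equiv_perm _ _
  rw [svals, List.reverse_insertionSort_ofFn_eq_of_perm hX.eigenvalues₀_antitone hperm,
    Real.sq_sqrt]
  rcases lt_or_ge (j - 1) (Fintype.card (Fin n)) with h | h
  · rw [List.getD_eq_getElem _ _ (by simpa using h), List.getElem_ofFn]
    exact hX0 _
  · rw [List.getD_eq_default _ _ (by simpa using h)]

theorem sum_Icc_svals_sq_eq_sum_filter_eigenvalues₀ {m n : ℕ} (X : Matrix (Fin m) (Fin n) ℝ)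
    (hX : (Xᵀ * X).IsHermitian) (N : ℕ) :
    ∑ j ∈ Finset.Icc (N + 1) (min m n), svals X j ^ 2 = ∑ j with N ≤ j.val, hX.eigenvalues₀ j := by
  have hT := isSymmetric_toEuclideanLin_iff.mpr hX
  have hx := inner_toEuclideanLin_transpose_mul_self X
  have hn : finrank ℝ (EuclideanSpace ℝ (Fin n)) = Fintype.card (Fin n) := finrank_euclideanSpace
  simp_rw [svals_sq_eq_getD_eigenvalues₀ X hX
    (hT.eigenvalues_nonneg_of_inner_apply_self_eq_sum_sq hn hx)]
  rw [show min m n = min m (Fintype.card (Fin n)) by rw [Fintype.card_fin]]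
  exact List.sum_Icc_getD_ofFn_eq_sum_filter _
    fun j hj => hT.eigenvalues_eq_zero_of_card_le hn hx (by simpa using hj)

theorem frobNorm_sq_eq_sum_rearrange (L A B : ℕ) (M : Matrix (Fin L) (Fin (A * B)) ℝ) :
    frobNorm M ^ 2 = ∑ r, ∑ a, rearrange L A B M r a ^ 2 := by
  rw [frobNorm, Real.sq_sqrt (by positivity), ← finProdFinEquiv.sum_comp, Fintype.sum_prod_type]
  simp only [rearrange, pairIdx, Equiv.symm_apply_apply]
  refine Finset.sum_congr rfl fun ℓ _ => ?_
  rw [← finProdFinEquiv.sum_comp, Fintype.sum_prod_type, Finset.sum_comm]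

theorem frobNorm_sub_sum_kron_sq {L A B N : ℕ} (W : Matrix (Fin L) (Fin (A * B)) ℝ)
    (T : Fin N → Matrix (Fin 1) (Fin A) ℝ) (S : Fin N → Matrix (Fin L) (Fin B) ℝ) :
    frobNorm (W - ∑ i, kron (T i) (S i)) ^ 2 =
      ∑ r, ‖WithLp.toLp 2 (rearrange L A B W r) - ∑ i, S i (finProdFinEquiv.symm r).1
        (finProdFinEquiv.symm r).2 • WithLp.toLp 2 (T i 0)‖ ^ 2 := by
  rw [frobNorm_sq_eq_sum_rearrange]
  refine Finset.sum_congr rfl fun r _ => ?_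
  rw [EuclideanSpace.norm_sq_eq]
  refine Finset.sum_congr rfl fun a _ => ?_
  simp [rearrange, kron, pairIdx, Matrix.sum_apply, mul_comm]

theorem min_kron_approx_error_eq_truncated_svals_general (L A B N : ℕ)
    (W : Matrix (Fin L) (Fin (A * B)) ℝ) :
    IsLeast
      {e : ℝ | ∃ (T : Fin N → Matrix (Fin 1) (Fin A) ℝ)
          (S : Fin N → Matrix (Fin L) (Fin B) ℝ),
          e = frobNorm (W - ∑ i, kron (T i) (S i)) ^ 2}
      (∑ j ∈ Finset.Icc (N + 1) (min (L * B) A), svals (rearrange L A B W) j ^ 2) := by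
  set X := rearrange L A B W
  have hX : (Xᵀ * X).IsHermitian := by simpa using isHermitian_conjTranspose_mul_self X
  obtain ⟨⟨c, d, hcd⟩, hlower⟩ :=
    (isSymmetric_toEuclideanLin_iff.mpr hX).isLeast_sum_norm_sub_sum_smul_sq
      finrank_euclideanSpace (inner_toEuclideanLin_transpose_mul_self X) N
  rw [sum_Icc_svals_sq_eq_sum_filter_eigenvalues₀ X hX]
  refine ⟨⟨fun i => of fun _ => (d i).ofLp, fun i => of fun ℓ b => c (finProdFinEquiv (ℓ, b)) i,
    hcd.trans ?_⟩, ?_⟩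
  · rw [frobNorm_sub_sum_kron_sq]
    simp only [of_apply, Prod.mk.eta, Equiv.apply_symm_apply]
    rfl
  · rintro _ ⟨T, S, rfl⟩
    rw [frobNorm_sub_sum_kron_sq]
    exact hlower ⟨_, _, rfl⟩

/-- Truncated Singular Value Bound of Kronecker Decomposition: the minimum
squared Frobenius reconstruction error over all `N`-term Kronecker decompositions of `W`
equals `Σ_{j=N+1}^{min(L·B, A)} σ_j(R(W))²`; the minimum is attained. -/
theorem min_kron_approx_error_eq_truncated_svals (L A B N : ℕ) (hL : 0 < L) (hA : 0 < A)
    (hB : 0 < B) (hN : 0 < N) (W : Matrix (Fin L) (Fin (A * B)) ℝ) :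
    IsLeast
      {e : ℝ | ∃ (T : Fin N → Matrix (Fin 1) (Fin A) ℝ)
          (S : Fin N → Matrix (Fin L) (Fin B) ℝ),
          e = frobNorm (W - ∑ i, kron (T i) (S i)) ^ 2}
      (∑ j ∈ Finset.Icc (N + 1) (min (L * B) A), svals (rearrange L A B W) j ^ 2) :=
  min_kron_approx_error_eq_truncated_svals_general L A B N W
end
end

section
/- (Achievability of the optimal Kronecker approximation) For any matrix W ∈ ℝ^{L×P} and any N ≥ 1, there exist templates T₁, …, T_N ∈ ℝ^{1×A} and scalers S₁, …, S_N ∈ ℝ^{L×B} such that ‖W − Σ_{i=1}^{N} T_i ⊗ S_i‖_F² = Σ_{j=N+1}^{min(L·B, A)} σ_j(R(W))², where σ_j denotes the j-th largest singular value of the rearranged matrix R(W). -/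
open Matrix

noncomputable section

/-!
`R` only permutes entries, so it preserves the Frobenius norm, and it sends `T ⊗ S` to the
rank-one matrix `vec(S) Tᵀ`; the problem becomes rank-`N` approximation of `M = R(W)`. Take an
orthonormal eigenbasis `v₀, v₁, …` of `MᵀM` with eigenvalues `λ₀ ≥ λ₁ ≥ ⋯`, so `λ_k = σ_{k+1}²`,
and keep the terms `(M v_k) v_kᵀ` for `k < N`. By Parseval each row of the error is the part of the
row of `M` along the `v_k` with `k ≥ N`, so the squared error is
`Σ_{k ≥ N} ‖M v_k‖² = Σ_{k ≥ N} λ_k`.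
At most `rank M ≤ L·B` eigenvalues are nonzero, which cuts the sum off at `min (L·B) A`.
-/

open scoped RealInnerProductSpace

theorem OrthonormalBasis.norm_sub_sum_inner_smul_sq {ι E : Type*} [Fintype ι] [DecidableEq ι]
    [NormedAddCommGroup E] [InnerProductSpace ℝ E] (b : OrthonormalBasis ι ℝ E) (x : E)
    (s : Finset ι) :
    ‖x - ∑ k ∈ s, ⟪b k, x⟫ • b k‖ ^ 2 = ∑ k ∈ sᶜ, ⟪b k, x⟫ ^ 2 := by
  have hx : x - ∑ k ∈ s, ⟪b k, x⟫ • b k = ∑ k ∈ sᶜ, ⟪b k, x⟫ • b k := by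
    rw [sub_eq_iff_eq_add, Finset.sum_compl_add_sum, b.sum_repr']
  rw [hx, ← b.sum_sq_inner_right, ← Finset.sum_add_sum_compl sᶜ, compl_compl,
    Finset.sum_eq_zero (s := s) fun k hk => ?_, add_zero]
  · exact Finset.sum_congr rfl fun k hk => by rw [b.orthonormal.inner_right_sum _ hk]
  · rw [inner_sum, Finset.sum_eq_zero fun j hj => ?_, sq, zero_mul]
    rw [inner_smul_right, b.inner_eq_zero (by rintro rfl; simp_all), mul_zero]

theorem Antitone.val_lt_of_apply_ne_zero {n r : ℕ} {f : Fin n → ℝ} (hf : Antitone f)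
    (hf0 : 0 ≤ f) (hr : Fintype.card {k // f k ≠ 0} ≤ r) {k : Fin n} (hk : f k ≠ 0) :
    (k : ℕ) < r := by
  have hpos : 0 < f k := lt_of_le_of_ne (hf0 k) hk.symm
  have hsub : Finset.Iic k ⊆ Finset.univ.filter (f · ≠ 0) := fun j hj => by
    simpa using (hpos.trans_le (hf (Finset.mem_Iic.mp hj))).ne'
  have := Finset.card_le_card hsub
  rw [Fin.card_Iic, ← Fintype.card_subtype] at this
  omega

theorem Fin.sum_dite_val_lt {M : Type*} [AddCommMonoid M] {N n : ℕ} (g : Fin n → M) :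
    ∑ i : Fin N, (if h : (i : ℕ) < n then g ⟨i, h⟩ else 0) =
      ∑ k ∈ Finset.univ.filter (fun k : Fin n => (k : ℕ) < N), g k := by
  refine Finset.sum_bij_ne_zero (fun i _ hi => ⟨i, by by_contra h; simp [h] at hi⟩)
    (fun i _ _ => by simp) (fun i _ _ j _ _ h => by simpa [Fin.ext_iff] using h)
    (fun k hk hk0 => ⟨⟨k, by simpa using hk⟩, by simp, by simpa using hk0, rfl⟩)
    (fun i _ _ => dif_pos _)

namespace Matrix.IsHermitian

variable {n : Type*} [Fintype n] [DecidableEq n] {A : Matrix n n ℝ}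

theorem exists_orthonormalBasis_mulVec_eq_eigenvalues₀ (hA : A.IsHermitian) :
    ∃ b : OrthonormalBasis (Fin (Fintype.card n)) ℝ (EuclideanSpace ℝ n),
      ∀ k, A *ᵥ b k = hA.eigenvalues₀ k • b k :=
  ⟨hA.eigenvectorBasis.reindex (Fintype.equivOfCardEq (Fintype.card_fin _)).symm,
    fun k => by simp [hA.mulVec_eigenvectorBasis, eigenvalues]⟩

theorem rank_eq_card_eigenvalues₀_ne_zero (hA : A.IsHermitian) :
    A.rank = Fintype.card {k // hA.eigenvalues₀ k ≠ 0} := by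
  rw [hA.rank_eq_card_non_zero_eigs]
  exact Fintype.card_congr ((Fintype.equivOfCardEq (Fintype.card_fin _)).symm.subtypeEquiv
    fun _ => Iff.rfl)

theorem reverse_insertionSort_ofFn_eigenvalues {n : ℕ} {A : Matrix (Fin n) (Fin n) ℝ}
    (hA : A.IsHermitian) :
    ((List.ofFn hA.eigenvalues).insertionSort (· ≤ ·)).reverse = List.ofFn hA.eigenvalues₀ := by
  refine List.Perm.eq_of_sortedGE (List.sortedGE_reverse.2 List.sortedLE_insertionSort)
    (List.sortedGE_ofFn_iff.2 hA.eigenvalues₀_antitone) ?_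
  refine (List.reverse_perm _).trans ((List.perm_insertionSort _ _).trans ?_)
  rw [← Multiset.coe_eq_coe, ← Fin.univ_val_map, ← Fin.univ_val_map,
    show hA.eigenvalues = hA.eigenvalues₀ ∘ _ from rfl, ← Multiset.map_map,
    Multiset.map_univ_val_equiv]

end Matrix.IsHermitian

namespace Matrix

variable {m n : Type*} [Fintype m] [Fintype n]

theorem eq_sum_sq_mulVec_of_transpose_mul_self_mulVec {M : Matrix m n ℝ}
    {x : EuclideanSpace ℝ n} {μ : ℝ} (hx : ‖x‖ = 1) (hμ : (Mᵀ * M) *ᵥ x = μ • x) :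
    μ = ∑ r, (M *ᵥ x) r ^ 2 := by
  have hxx : x ⬝ᵥ x = 1 := by
    rw [← one_pow 2, ← hx, EuclideanSpace.real_norm_sq_eq]; simp [dotProduct, sq]
  calc μ = x ⬝ᵥ ((Mᵀ * M) *ᵥ x) := by rw [hμ, dotProduct_smul, hxx, smul_eq_mul, mul_one]
    _ = ∑ r, (M *ᵥ x) r ^ 2 := by
      rw [← mulVec_mulVec, dotProduct_mulVec, vecMul_transpose]; simp [dotProduct, sq]

theorem sum_sq_sub_sum_vecMulVec_eigenbasis [DecidableEq n] {ι : Type*} [Fintype ι]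
    [DecidableEq ι] (M : Matrix m n ℝ) (b : OrthonormalBasis ι ℝ (EuclideanSpace ℝ n))
    (μ : ι → ℝ) (hb : ∀ k, (Mᵀ * M) *ᵥ b k = μ k • b k) (s : Finset ι) :
    ∑ r, ∑ a, (M - ∑ k ∈ s, vecMulVec (M *ᵥ b k) (b k)) r a ^ 2 = ∑ k ∈ sᶜ, μ k := by
  have hrow : ∀ r k, ⟪b k, WithLp.toLp 2 (M r)⟫ = (M *ᵥ b k) r := fun r k => by
    simp [EuclideanSpace.inner_eq_star_dotProduct, mulVec]
  calc ∑ r, ∑ a, (M - ∑ k ∈ s, vecMulVec (M *ᵥ b k) (b k)) r a ^ 2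
      = ∑ r, ‖WithLp.toLp 2 (M r) - ∑ k ∈ s, ⟪b k, WithLp.toLp 2 (M r)⟫ • b k‖ ^ 2 := by
        refine Finset.sum_congr rfl fun r _ => ?_
        rw [EuclideanSpace.real_norm_sq_eq]
        simp [hrow, Matrix.sum_apply, vecMulVec_apply]
    _ = ∑ k ∈ sᶜ, ∑ r, (M *ᵥ b k) r ^ 2 := by
        simp_rw [b.norm_sub_sum_inner_smul_sq, hrow]; exact Finset.sum_comm
    _ = ∑ k ∈ sᶜ, μ k := Finset.sum_congr rfl fun k _ =>
        (eq_sum_sq_mulVec_of_transpose_mul_self_mulVec (b.orthonormal.1 k) (hb k)).symm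

end Matrix

theorem frobNorm_sq {m n : ℕ} (M : Matrix (Fin m) (Fin n) ℝ) :
    frobNorm M ^ 2 = ∑ i, ∑ j, M i j ^ 2 :=
  Real.sq_sqrt (by positivity)

section TransposeMulSelf

variable {m n : ℕ} (M : Matrix (Fin m) (Fin n) ℝ) (hM : (Mᵀ * M).IsHermitian)

theorem eigenvalues₀_transpose_mul_self_nonneg (k : Fin (Fintype.card (Fin n))) :
    0 ≤ hM.eigenvalues₀ k := by
  obtain ⟨b, hb⟩ := hM.exists_orthonormalBasis_mulVec_eq_eigenvalues₀
  rw [eq_sum_sq_mulVec_of_transpose_mul_self_mulVec (b.orthonormal.1 k) (hb k)]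
  positivity

theorem val_lt_of_eigenvalues₀_transpose_mul_self_ne_zero {k : Fin (Fintype.card (Fin n))}
    (hk : hM.eigenvalues₀ k ≠ 0) : (k : ℕ) < m := by
  refine hM.eigenvalues₀_antitone.val_lt_of_apply_ne_zero
    (eigenvalues₀_transpose_mul_self_nonneg M hM) ?_ hk
  rw [← hM.rank_eq_card_eigenvalues₀_ne_zero, rank_transpose_mul_self]
  exact M.rank_le_height

theorem svals_succ_sq (k : Fin (Fintype.card (Fin n))) :
    svals M (k + 1) ^ 2 = hM.eigenvalues₀ k := by
  rw [svals, hM.reverse_insertionSort_ofFn_eigenvalues, Nat.add_sub_cancel,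
    List.getD_eq_getElem _ _ (by simpa using k.2), List.getElem_ofFn,
    Real.sq_sqrt (eigenvalues₀_transpose_mul_self_nonneg M hM k)]

theorem sum_svals_sq_Icc_eq_sum_eigenvalues₀ (N : ℕ) :
    ∑ j ∈ Finset.Icc (N + 1) (min m n), svals M j ^ 2 =
      ∑ k ∈ (Finset.univ.filter fun k : Fin (Fintype.card (Fin n)) => (k : ℕ) < N)ᶜ,
        hM.eigenvalues₀ k := by
  symm
  refine Finset.sum_bij_ne_zero (fun k _ _ => k + 1) ?_ ?_ ?_ ?_
  · intro k hk hk0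
    have hkm := val_lt_of_eigenvalues₀_transpose_mul_self_ne_zero M hM hk0
    have hkn := k.2
    simp_all
  · intro k _ _ k' _ _ h
    exact Fin.ext (by simpa using h)
  · intro j hj hj0
    rw [Finset.mem_Icc] at hj
    have hj1 : j - 1 + 1 = j := by omega
    refine ⟨⟨j - 1, by simp; omega⟩, by simp; omega, ?_, hj1⟩
    rwa [← svals_succ_sq M hM, hj1]
  · intro k _ _
    exact (svals_succ_sq M hM k).symm

end TransposeMulSelf

theorem exists_frobNorm_sub_sum_vecMulVec_sq_eq {m n : ℕ} (M : Matrix (Fin m) (Fin n) ℝ)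
    (N : ℕ) :
    ∃ (u : Fin N → Fin m → ℝ) (v : Fin N → Fin n → ℝ),
      frobNorm (M - ∑ i, vecMulVec (u i) (v i)) ^ 2 =
        ∑ j ∈ Finset.Icc (N + 1) (min m n), svals M j ^ 2 := by
  have hM : (Mᵀ * M).IsHermitian := by simpa using isHermitian_conjTranspose_mul_self M
  obtain ⟨b, hb⟩ := hM.exists_orthonormalBasis_mulVec_eq_eigenvalues₀
  let x : Fin N → EuclideanSpace ℝ (Fin n) := fun i =>
    if h : (i : ℕ) < Fintype.card (Fin n) then b ⟨i, h⟩ else 0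
  refine ⟨fun i => M *ᵥ x i, fun i => x i, ?_⟩
  have hterm : ∀ i, vecMulVec (M *ᵥ x i) (x i) = if h : (i : ℕ) < Fintype.card (Fin n)
      then vecMulVec (M *ᵥ b ⟨i, h⟩) (b ⟨i, h⟩) else 0 := fun i => by
    simp only [x]; split_ifs <;> simp
  rw [frobNorm_sq, Finset.sum_congr rfl fun i _ => hterm i,
    Fin.sum_dite_val_lt fun k => vecMulVec (M *ᵥ b k) (b k),
    sum_sq_sub_sum_vecMulVec_eigenbasis M b _ hb, sum_svals_sq_Icc_eq_sum_eigenvalues₀ M hM]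

section Rearrange

variable {L A B : ℕ}

theorem frobNorm_rearrange (X : Matrix (Fin L) (Fin (A * B)) ℝ) :
    frobNorm (rearrange L A B X) = frobNorm X := by
  simp only [frobNorm, rearrange, pairIdx]
  congr 1
  rw [← finProdFinEquiv.sum_comp, Fintype.sum_prod_type]
  refine Finset.sum_congr rfl fun ℓ _ => ?_
  rw [← finProdFinEquiv.sum_comp, Fintype.sum_prod_type, Finset.sum_comm]
  simp

theorem rearrange_sub_sum {ι : Type*} (s : Finset ι) (W : Matrix (Fin L) (Fin (A * B)) ℝ)
    (X : ι → Matrix (Fin L) (Fin (A * B)) ℝ) :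
    rearrange L A B (W - ∑ i ∈ s, X i) = rearrange L A B W - ∑ i ∈ s, rearrange L A B (X i) := by
  ext r a
  simp [rearrange, Matrix.sum_apply]

theorem rearrange_kron_replicateRow (u : Fin (L * B) → ℝ) (v : Fin A → ℝ) :
    rearrange L A B (kron (replicateRow (Fin 1) v) fun ℓ b => u (finProdFinEquiv (ℓ, b))) =
      vecMulVec u v := by
  ext r a
  simp only [rearrange, kron, pairIdx, Equiv.symm_apply_apply, Prod.mk.eta,
    Equiv.apply_symm_apply, vecMulVec_apply, replicateRow_apply, mul_comm]

end Rearrange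

theorem exists_kron_approx_achieving_truncated_svals_general (L A B N : ℕ)
    (W : Matrix (Fin L) (Fin (A * B)) ℝ) :
    ∃ (T : Fin N → Matrix (Fin 1) (Fin A) ℝ) (S : Fin N → Matrix (Fin L) (Fin B) ℝ),
      frobNorm (W - ∑ i, kron (T i) (S i)) ^ 2 =
        ∑ j ∈ Finset.Icc (N + 1) (min (L * B) A), svals (rearrange L A B W) j ^ 2 := by
  obtain ⟨u, v, h⟩ := exists_frobNorm_sub_sum_vecMulVec_sq_eq (rearrange L A B W) N
  refine ⟨fun i => replicateRow (Fin 1) (v i), fun i ℓ b => u i (finProdFinEquiv (ℓ, b)), ?_⟩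
  rw [← frobNorm_rearrange, rearrange_sub_sum]
  simpa only [rearrange_kron_replicateRow] using h

/-- Achievability of the optimal Kronecker approximation: for any `W` and
`N ≥ 1` there is an `N`-term Kronecker decomposition whose squared Frobenius error equals
the truncated singular-value sum of `R(W)`. -/
theorem exists_kron_approx_achieving_truncated_svals (L A B N : ℕ) (hL : 0 < L)
    (hA : 0 < A) (hB : 0 < B) (hN : 1 ≤ N) (W : Matrix (Fin L) (Fin (A * B)) ℝ) :
    ∃ (T : Fin N → Matrix (Fin 1) (Fin A) ℝ) (S : Fin N → Matrix (Fin L) (Fin B) ℝ),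
      frobNorm (W - ∑ i, kron (T i) (S i)) ^ 2 =
        ∑ j ∈ Finset.Icc (N + 1) (min (L * B) A), svals (rearrange L A B W) j ^ 2 :=
  exists_kron_approx_achieving_truncated_svals_general L A B N W
end
end
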